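/- Let G' be a graph of order n with minimum degree at least k (k ≥ 2, n ≥ 11k) equal to its own (n+1)-closure, which is not Hamilton-connected and satisfies e(G') > C(n−k,2) + k(k+1). Then the clique number of G' equals n − k + 1. -/

import Mathlib

open Classical SimpleGraph

noncomputable section

/-- Degree of a vertex (via `Set.ncard`, avoiding decidability assumptions). -/
noncomputable def gdeg {V : Type*} (G : SimpleGraph V) (v : V) : ℕ :=
  (G.neighborSet v).ncard

/-- A graph is Hamilton-connected if every two distinct vertices are joined by a
Hamiltonian path. -/
def HamConnected {V : Type*} (G : SimpleGraph V) : Prop :=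
  ∀ u v : V, u ≠ v → ∃ p : G.Walk u v, p.IsHamiltonian

/-- One closure step: simultaneously join all nonadjacent pairs with degree sum ≥ k. -/
noncomputable def closureStep {V : Type*} (k : ℕ) (G : SimpleGraph V) : SimpleGraph V :=
  G ⊔ SimpleGraph.fromRel (fun u v => ¬ G.Adj u v ∧ k ≤ gdeg G u + gdeg G v)

/-- The `k`-closure of a graph: repeatedly join nonadjacent pairs of vertices with
degree sum at least `k` until no such pair remains. -/
noncomputable def kClosure {V : Type*} [Fintype V] (k : ℕ) (G : SimpleGraph V) : SimpleGraph V :=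
  (closureStep k)^[Fintype.card V * Fintype.card V] G

/-!
Call a vertex heavy if its degree exceeds `n / 2` and light otherwise. In a graph equal to its
`(n+1)`-closure, nonadjacent vertices have degree sum at most `n`, so the heavy vertices form a
clique. If `ω(G') > n - k + 1`, every vertex is adjacent to the whole large clique, which forces
all degrees above `n / 2`; the graph is then complete, hence Hamilton-connected.
If `ω(G') ≤ n - k`, there are at least `k` light vertices. When fewer than half of the vertices
are light, each light vertex `w` misses some heavy `h`, all non-neighbours of `h` are light, and
`deg w ≤ n - deg h` bounds `deg w` by the number of light vertices plus one; counting edges at the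
heavy clique then gives `e(G') ≤ C(n-k,2) + k(k+1)` by convexity. When at least half are light,
the trivial degree bounds already give this for `n ≥ 11k`.
-/

open Finset

theorem sub_mul_sub_add_two_mul_le {n k t : ℕ} (hkt : k ≤ t) (ht : 2 * t < n)
    (hn : 6 * k + 3 ≤ n) :
    (n - t) * (n - t - 1) + 2 * (t * (t + 1)) ≤ 2 * ((n - k).choose 2 + k * (k + 1)) := by
  rw [Nat.sub_sub, ← Nat.cast_le (α := ℚ)]
  push_cast [Nat.cast_choose_two, Nat.cast_sub (by omega : t + 1 ≤ n),
    Nat.cast_sub (by omega : t ≤ n), Nat.cast_sub (by omega : k ≤ n)]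
  have hkt' : (k : ℚ) ≤ t := by exact_mod_cast hkt
  have ht' : 2 * (t : ℚ) + 1 ≤ n := by exact_mod_cast ht
  have hn' : 6 * (k : ℚ) + 3 ≤ n := by exact_mod_cast hn
  -- the left side is convex in `t` and equals the right side at `t = k`
  nlinarith [mul_nonneg (sub_nonneg.2 hkt') (by linarith : (0 : ℚ) ≤ 2 * n - 3 * t - 3 * k - 3)]

theorem two_mul_sub_mul_add_mul_le {n k t : ℕ} (ht : n ≤ 2 * t) (htn : t ≤ n)
    (hn : 8 * k + 2 ≤ n) :
    2 * ((n - t) * (n - 1)) + t * n ≤ 4 * ((n - k).choose 2 + k * (k + 1)) := by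
  rw [← Nat.cast_le (α := ℚ)]
  push_cast [Nat.cast_choose_two, Nat.cast_sub htn, Nat.cast_sub (by omega : 1 ≤ n),
    Nat.cast_sub (by omega : k ≤ n)]
  have ht' : (n : ℚ) ≤ 2 * t := by exact_mod_cast ht
  have hn' : 8 * (k : ℚ) + 2 ≤ n := by exact_mod_cast hn
  nlinarith [mul_nonneg (sub_nonneg.2 ht') (by linarith : (0 : ℚ) ≤ n - 2),
    mul_nonneg (by linarith : (0 : ℚ) ≤ n) (by linarith : (0 : ℚ) ≤ n - 8 * k - 2),
    sq_nonneg (k : ℚ)]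

namespace SimpleGraph

variable {V : Type*}

theorem hamConnected_top [Fintype V] : HamConnected (⊤ : SimpleGraph V) := by
  classical
  intro u v huv
  obtain ⟨r, hr, hmem⟩ : ∃ r : List V, r.Nodup ∧ ∀ w, w ∈ r ↔ w ≠ v ∧ w ≠ u :=
    ⟨((univ.erase u).erase v).toList, nodup_toList _, by simp⟩
  have hl : (u :: (r ++ [v])).Nodup := by simp +contextual [hr, hmem, huv, List.nodup_append]
  have hchain : (u :: (r ++ [v])).IsChain (⊤ : SimpleGraph V).Adj :=
    hl.isChain.imp fun _ _ h => (top_adj _ _).2 h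
  let p : (⊤ : SimpleGraph V).Walk u ((u :: (r ++ [v])).getLast (List.cons_ne_nil u _)) :=
    Walk.ofSupport _ _ hchain
  have hp : p.support = u :: (r ++ [v]) := Walk.support_ofSupport _ _
  refine ⟨p.copy rfl (by simp), ?_⟩
  refine Walk.IsPath.isHamiltonian_of_mem ?_ fun w => ?_
  · rw [Walk.isPath_copy, Walk.isPath_def, hp]
    exact hl
  · rw [Walk.support_copy, hp]
    simp only [List.mem_cons, List.mem_append, hmem, List.not_mem_nil]
    tauto

lemma gdeg_eq_degree [Fintype V] (G : SimpleGraph V) [DecidableRel G.Adj] (v : V) :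
    gdeg G v = G.degree v := by
  rw [gdeg, ← card_neighborFinset_eq_degree, neighborFinset, Set.ncard_eq_toFinset_card']

/-- Double counting of the edges leaving `s`. -/
lemma sum_degree_le_card_mul_add_sum_degree_compl [Fintype V] [DecidableEq V]
    (G : SimpleGraph V) [DecidableRel G.Adj] (s : Finset V) :
    ∑ v ∈ s, G.degree v ≤ #s * (#s - 1) + ∑ w ∈ sᶜ, G.degree w := by
  have hdeg : ∀ v ∈ s, G.degree v ≤ (#s - 1) + #{w ∈ sᶜ | G.Adj v w} := by
    intro v hv
    rw [← card_neighborFinset_eq_degree, ← card_erase_of_mem hv]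
    refine (card_le_card fun w hw => ?_).trans (card_union_le _ _)
    rw [mem_neighborFinset] at hw
    by_cases hws : w ∈ s
    · exact mem_union_left _ (mem_erase.2 ⟨hw.ne.symm, hws⟩)
    · exact mem_union_right _ (mem_filter.2 ⟨mem_compl.2 hws, hw⟩)
  have hcross : ∑ v ∈ s, #{w ∈ sᶜ | G.Adj v w} ≤ ∑ w ∈ sᶜ, G.degree w := by
    change ∑ v ∈ s, #(bipartiteAbove G.Adj sᶜ v) ≤ _
    rw [sum_card_bipartiteAbove_eq_sum_card_bipartiteBelow]
    gcongr with w
    rw [← card_neighborFinset_eq_degree]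
    exact card_le_card fun v hv => (mem_neighborFinset ..).2 (mem_filter.1 hv).2.symm
  calc ∑ v ∈ s, G.degree v ≤ ∑ v ∈ s, ((#s - 1) + #{w ∈ sᶜ | G.Adj v w}) :=
        sum_le_sum hdeg
    _ = #s * (#s - 1) + ∑ v ∈ s, #{w ∈ sᶜ | G.Adj v w} := by
      rw [sum_add_distrib, sum_const, smul_eq_mul]
    _ ≤ #s * (#s - 1) + ∑ w ∈ sᶜ, G.degree w := by gcongr

/-- The graph is its own `k`-closure. -/
def IsDegreeSumClosed [Fintype V] (G : SimpleGraph V) [DecidableRel G.Adj] (k : ℕ) : Prop :=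
  ∀ ⦃u v : V⦄, u ≠ v → k ≤ G.degree u + G.degree v → G.Adj u v

def lightVertices [Fintype V] (G : SimpleGraph V) [DecidableRel G.Adj] (n : ℕ) : Finset V :=
  {v | 2 * G.degree v ≤ n}

variable [Fintype V] {G : SimpleGraph V} [DecidableRel G.Adj] {n : ℕ}

lemma isDegreeSumClosed_of_kClosure_eq_self {k : ℕ} (h : kClosure k G = G) :
    G.IsDegreeSumClosed k := by
  intro u v huv hd
  have hV : 0 < Fintype.card V := Fintype.card_pos_iff.2 ⟨u⟩
  obtain ⟨N, hN⟩ : ∃ N, Fintype.card V * Fintype.card V = N + 1 :=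
    Nat.exists_eq_add_one.2 (Nat.mul_pos hV hV)
  have hstep : closureStep k G ≤ G := by
    have hinfl : id ≤ closureStep (V := V) k := fun _ => le_sup_left
    calc closureStep k G ≤ (closureStep k)^[N] (closureStep k G) :=
          Function.id_le_iterate_of_id_le hinfl N (closureStep k G)
      _ = kClosure k G := by rw [kClosure, hN, Function.iterate_succ_apply]
      _ = G := h
  by_contra hadj
  rw [← gdeg_eq_degree, ← gdeg_eq_degree] at hd
  exact hadj (hstep (Or.inr ⟨huv, Or.inl ⟨hadj, hd⟩⟩))

namespace IsDegreeSumClosed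

theorem eq_top_of_isNClique {k m : ℕ} {s : Finset V} (hG : G.IsDegreeSumClosed (n + 1))
    (hδ : ∀ v, k ≤ G.degree v) (hs : G.IsNClique m s) (hm : n + 2 ≤ m + k)
    (hk : 2 * k ≤ n + 1) : G = ⊤ := by
  classical
  have hclique : ∀ c ∈ s, m - 1 ≤ G.degree c := fun c hc => by
    rw [← hs.card_eq, ← card_erase_of_mem hc, ← card_neighborFinset_eq_degree]
    exact card_le_card fun x hx => (mem_neighborFinset ..).2 <|
      hs.isClique (mem_coe.2 hc) (mem_coe.2 (mem_of_mem_erase hx)) (ne_of_mem_erase hx).symm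
  have hdeg : ∀ x, m - 1 ≤ G.degree x := fun x => by
    rw [← hs.card_eq]
    calc #s - 1 ≤ #(s.erase x) := pred_card_le_card_erase
      _ ≤ G.degree x := by
        rw [← card_neighborFinset_eq_degree]
        refine card_le_card fun c hc => (mem_neighborFinset ..).2 <|
          hG (ne_of_mem_erase hc).symm ?_
        have := hδ x
        have := hclique c (mem_of_mem_erase hc)
        omega
  ext u v
  refine ⟨Adj.ne, fun huv => hG huv ?_⟩
  have := hdeg u
  have := hdeg v
  omega

theorem isClique_compl_lightVertices [DecidableEq V] (hG : G.IsDegreeSumClosed (n + 1)) :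
    G.IsClique ((lightVertices G n)ᶜ : Finset V) := by
  intro u hu v hv huv
  simp only [coe_compl, Set.mem_compl_iff, mem_coe, lightVertices, mem_filter, mem_univ,
    true_and, not_le] at hu hv
  exact hG huv (by omega)

theorem compl_neighborFinset_subset_lightVertices [DecidableEq V]
    (hG : G.IsDegreeSumClosed (n + 1)) {v : V} (hv : v ∉ lightVertices G n) :
    Gᶜ.neighborFinset v ⊆ lightVertices G n := by
  intro w hw
  rw [mem_neighborFinset, compl_adj] at hw
  by_contra hw'
  simp only [lightVertices, mem_filter, mem_univ, true_and, not_le] at hv hw'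
  exact hw.2 (hG hw.1 (by omega))

theorem degree_le_card_lightVertices_add_one [DecidableEq V] (hG : G.IsDegreeSumClosed (n + 1))
    (hcard : Fintype.card V = n) (ht : 2 * #(lightVertices G n) < n) {w : V}
    (hw : w ∈ lightVertices G n) : G.degree w ≤ #(lightVertices G n) + 1 := by
  have hwL : 2 * G.degree w ≤ n := (mem_filter.1 hw).2
  obtain ⟨h, hwh, hh⟩ : ∃ h, Gᶜ.Adj w h ∧ h ∉ lightVertices G n := by
    by_contra! hall
    have hsub : Gᶜ.neighborFinset w ⊆ (lightVertices G n).erase w := fun x hx => by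
      rw [mem_neighborFinset] at hx
      exact mem_erase.2 ⟨hx.ne.symm, hall x hx⟩
    have := card_le_card hsub
    rw [card_neighborFinset_eq_degree, degree_compl, card_erase_of_mem hw, hcard] at this
    have := card_pos.2 ⟨w, hw⟩
    omega
  have hhL := card_le_card (hG.compl_neighborFinset_subset_lightVertices hh)
  rw [card_neighborFinset_eq_degree, degree_compl, hcard] at hhL
  have hwh' : G.degree w + G.degree h ≤ n := by
    by_contra! hsum
    exact ((compl_adj G w h).1 hwh).2 (hG ((compl_adj G w h).1 hwh).1 hsum)
  have := G.degree_lt_card_verts h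
  omega

theorem card_edgeFinset_le [DecidableEq V] {k : ℕ} (hG : G.IsDegreeSumClosed (n + 1))
    (hcard : Fintype.card V = n) (hω : G.cliqueNum + k ≤ n) (hn : 8 * k + 3 ≤ n) :
    #G.edgeFinset ≤ (n - k).choose 2 + k * (k + 1) := by
  have hclique := (hG.isClique_compl_lightVertices).card_le_cliqueNum
  set L := lightVertices G n
  have hHL : #Lᶜ + #L = n := hcard ▸ card_compl_add_card L
  have hkL : k ≤ #L := by omega
  have hsum : ∑ v ∈ Lᶜ, G.degree v + ∑ v ∈ L, G.degree v = 2 * #G.edgeFinset := by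
    rw [sum_compl_add_sum, sum_degrees_eq_twice_card_edges]
  have hH := sum_degree_le_card_mul_add_sum_degree_compl G Lᶜ
  rw [compl_compl] at hH
  rcases lt_or_ge (2 * #L) n with ht | ht
  · have hL : ∑ v ∈ L, G.degree v ≤ #L * (#L + 1) := by
      simpa using sum_le_card_nsmul L _ _
        fun w hw => hG.degree_le_card_lightVertices_add_one hcard ht hw
    have := sub_mul_sub_add_two_mul_le hkL ht (by omega)
    rw [show n - #L = #Lᶜ by omega] at this
    omega
  · have hHb : ∑ v ∈ Lᶜ, G.degree v ≤ #Lᶜ * (n - 1) :=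
      (sum_le_card_nsmul Lᶜ _ _ fun v _ => by
        have := G.degree_lt_card_verts v
        omega).trans_eq (smul_eq_mul _ _)
    have hLb : ∑ v ∈ L, 2 * G.degree v ≤ #L * n := by
      simpa using sum_le_card_nsmul L _ _ fun v hv => (mem_filter.1 hv).2
    rw [← mul_sum] at hLb
    have := two_mul_sub_mul_add_mul_le ht (by omega) (k := k) (by omega)
    rw [show n - #L = #Lᶜ by omega] at this
    omega

end IsDegreeSumClosed

end SimpleGraph

/-- **Claim in Theorem 3.1.** If `G'` has order `n`, minimum degree at least `k` (`k ≥ 2`,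
`n ≥ 11k`), equals its own `(n+1)`-closure, is not Hamilton-connected, and satisfies
`e(G') > C(n-k,2) + k(k+1)`, then `ω(G') = n - k + 1`. -/
theorem cliqueNum_of_closed_graph (n k : ℕ) (hk : 2 ≤ k) (hn : 11 * k ≤ n)
    (G' : SimpleGraph (Fin n)) (hδ : ∀ v, k ≤ gdeg G' v)
    (hclosed : kClosure (n + 1) G' = G')
    (hnotHC : ¬ HamConnected G')
    (he : (n - k).choose 2 + k * (k + 1) < G'.edgeSet.ncard) :
    G'.cliqueNum = n - k + 1 := by
  have hG := isDegreeSumClosed_of_kClosure_eq_self hclosed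
  apply le_antisymm
  · by_contra! hω
    obtain ⟨s, hs⟩ := G'.exists_isNClique_cliqueNum
    have htop := hG.eq_top_of_isNClique (fun v => (gdeg_eq_degree G' v ▸ hδ v)) hs
      (by omega) (by omega)
    exact hnotHC (htop ▸ hamConnected_top)
  · by_contra! hω
    have := hG.card_edgeFinset_le (Fintype.card_fin n) (k := k) (by omega) (by omega)
    rw [← coe_edgeFinset, Set.ncard_coe_finset] at he
    omega

end
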